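/- arXiv:2408.01326 — 2 statements merged into one kernel-verified Lean document; each statement's English description precedes it below -/
import Mathlib

section
/- Let e_{1},…,e_{a} and f_{1},…,f_{b} be mutually independent Rademacher variables and v ∈ ℝ a constant, and more generally for i = 1,…,n let e_{i1ℓ} (ℓ ≤ N_{i1}) and e_{i2m} (m ≤ N_{i2}) be independent Rademacher variables and v_i ∈ ℝ. Then for any τ > 0, P(|∑_{i=1}^n v_i (∑_{ℓ=1}^{N_{i1}} e_{i1ℓ})(∑_{m=1}^{N_{i2}} e_{i2m})| > τ · ω) ≤ 4 exp(−τ²/2), where ω² = min(∑_i v_i² N_{i1}² N_{i2}, ∑_i v_i² N_{i1} N_{i2}²). -/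
/-!
Write `X = ∑_j C_j η_j`, where `η_j` runs over the second family of signs and
`C_j = v_i ∑_ℓ e_{i1ℓ}` depends only on the first family, so `|C_j| ≤ |v_i| N_{i1}`. By
independence the law of the pair of families is a product measure; for every fixed value of the
first family, Hoeffding's lemma for the Rademacher sum `∑_j C_j η_j` bounds its moment generating
function by `exp (t² ∑_j C_j² / 2) ≤ exp (t² ∑_i v_i² N_{i1}² N_{i2} / 2)`, and Fubini integrates
this bound over the first family. Exchanging the roles of the two families gives the other variance
proxy, and the Chernoff bound on both tails gives `2 exp (-τ² / 2)`.
-/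

open MeasureTheory ProbabilityTheory Real
open scoped NNReal

namespace ProbabilityTheory

section Rademacher

variable {Ω : Type*} [MeasurableSpace Ω]

def IsRademacher (X : Ω → ℝ) (μ : Measure Ω) : Prop :=
  μ {ω | X ω = 1} = 1 / 2 ∧ μ {ω | X ω = -1} = 1 / 2

variable {μ : Measure Ω} [IsProbabilityMeasure μ] {X : Ω → ℝ}

lemma IsRademacher.ae_eq_one_or_eq_neg_one (hX : Measurable X) (hrad : IsRademacher X μ) :
    ∀ᵐ ω ∂μ, X ω = 1 ∨ X ω = -1 := by
  have hA : MeasurableSet {ω | X ω = 1} := hX (measurableSet_singleton _)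
  have hB : MeasurableSet {ω | X ω = -1} := hX (measurableSet_singleton _)
  have hdisj : Disjoint {ω | X ω = 1} {ω | X ω = -1} :=
    (Set.disjoint_singleton.2 (by norm_num)).preimage X
  refine (mem_ae_iff_prob_eq_one (hA.union hB)).2 ?_
  rw [measure_union hdisj hB, hrad.1, hrad.2, ENNReal.add_halves]

lemma IsRademacher.integral_eq_zero (hX : Measurable X) (hrad : IsRademacher X μ) :
    ∫ ω, X ω ∂μ = 0 := by
  have hae := hrad.ae_eq_one_or_eq_neg_one hX
  have hA : MeasurableSet {ω | X ω = 1} := hX (measurableSet_singleton 1)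
  have hB : MeasurableSet {ω | X ω = -1} := hX (measurableSet_singleton (-1))
  have hdisj : Disjoint {ω | X ω = 1} {ω | X ω = -1} :=
    (Set.disjoint_singleton.2 (by norm_num)).preimage X
  have hint : Integrable X μ := Integrable.of_mem_Icc (-1) 1 hX.aemeasurable <| by
    filter_upwards [hae] with ω h
    rcases h with h | h <;> simp [h]
  calc ∫ ω, X ω ∂μ = ∫ ω in {ω | X ω = 1} ∪ {ω | X ω = -1}, X ω ∂μ := by
        rw [Measure.restrict_eq_self_of_ae_mem (s := {ω | X ω = 1} ∪ {ω | X ω = -1}) hae]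
    _ = ∫ _ in {ω | X ω = 1}, (1 : ℝ) ∂μ + ∫ _ in {ω | X ω = -1}, (-1 : ℝ) ∂μ := by
        rw [setIntegral_union hdisj hB hint.integrableOn hint.integrableOn,
          setIntegral_congr_fun hA fun _ h => h, setIntegral_congr_fun hB fun _ h => h]
    _ = 0 := by simp [measureReal_def, hrad.1, hrad.2]

lemma IsRademacher.hasSubgaussianMGF (hX : Measurable X) (hrad : IsRademacher X μ) :
    HasSubgaussianMGF X 1 μ := by
  have h := hasSubgaussianMGF_of_mem_Icc_of_integral_eq_zero (a := -1) (b := 1) hX.aemeasurable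
    (by filter_upwards [hrad.ae_eq_one_or_eq_neg_one hX] with ω h
        rcases h with h | h <;> simp [h])
    (hrad.integral_eq_zero hX)
  convert h
  norm_num

lemma hasSubgaussianMGF_sum_mul_of_isRademacher {ι : Type*} [Fintype ι] {ε : ι → Ω → ℝ}
    (hε : ∀ j, Measurable (ε j)) (hindep : iIndepFun ε μ) (hrad : ∀ j, IsRademacher (ε j) μ)
    (c : ι → ℝ) :
    HasSubgaussianMGF (fun ω => ∑ j, c j * ε j ω) (∑ j, ‖c j‖₊ ^ 2) μ := by
  refine HasSubgaussianMGF.sum_of_iIndepFun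
    (hindep.comp (fun j x => c j * x) fun j => measurable_const_mul (c j)) fun j _ => ?_
  convert ((hrad j).hasSubgaussianMGF (hε j)).const_mul (c j) using 1
  · rfl
  · change _ = (⟨c j ^ 2, sq_nonneg _⟩ : ℝ≥0) * 1
    ext
    simp

end Rademacher

lemma HasSubgaussianMGF.mono {Ω : Type*} [MeasurableSpace Ω] {μ : Measure Ω} {X : Ω → ℝ}
    {c d : ℝ≥0} (h : HasSubgaussianMGF X c μ) (hcd : c ≤ d) : HasSubgaussianMGF X d μ :=
  ⟨h.integrable_exp_mul, fun t => (h.mgf_le t).trans (exp_le_exp.2 (by gcongr))⟩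

lemma HasSubgaussianMGF.measure_mul_sqrt_lt_abs_le {Ω : Type*} [MeasurableSpace Ω]
    {μ : Measure Ω} [IsProbabilityMeasure μ] {X : Ω → ℝ} {c : ℝ≥0}
    (h : HasSubgaussianMGF X c μ) {τ : ℝ} (hτ : 0 ≤ τ) :
    μ {ω | τ * √c < |X ω|} ≤ ENNReal.ofReal (2 * exp (-τ ^ 2 / 2)) := by
  rcases eq_or_ne c 0 with rfl | hc
  · refine le_of_eq_of_le (measure_eq_zero_iff_ae_notMem.2 ?_) zero_le
    filter_upwards [h.ae_eq_zero_of_hasSubgaussianMGF_zero] with ω hω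
    simp [hω]
  have hε : 0 ≤ τ * √c := by positivity
  have hexp : exp (-(τ * √c) ^ 2 / (2 * c)) = exp (-τ ^ 2 / 2) := by
    have : (c : ℝ) ≠ 0 := NNReal.coe_ne_zero.2 hc
    rw [mul_pow, Real.sq_sqrt c.coe_nonneg]
    field_simp
  have hsub : {ω | τ * √c < |X ω|} ⊆ {ω | τ * √c ≤ X ω} ∪ {ω | τ * √c ≤ (-X) ω} :=
    fun ω hω => by
      rcases lt_abs.1 (show τ * √c < |X ω| from hω) with h | h
      exacts [Or.inl h.le, Or.inr h.le]
  calc μ {ω | τ * √c < |X ω|}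
      ≤ μ {ω | τ * √c ≤ X ω} + μ {ω | τ * √c ≤ (-X) ω} :=
        (measure_mono hsub).trans (measure_union_le _ _)
    _ ≤ ENNReal.ofReal (exp (-τ ^ 2 / 2)) + ENNReal.ofReal (exp (-τ ^ 2 / 2)) := by
        rw [← ofReal_measureReal, ← ofReal_measureReal, ← hexp]
        exact add_le_add (ENNReal.ofReal_le_ofReal (h.measure_ge_le hε))
          (ENNReal.ofReal_le_ofReal (h.neg.measure_ge_le hε))
    _ = ENNReal.ofReal (2 * exp (-τ ^ 2 / 2)) := by
        rw [← ENNReal.ofReal_add (exp_pos _).le (exp_pos _).le, two_mul]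

lemma hasSubgaussianMGF_prod_of_ae_hasSubgaussianMGF {A B : Type*} [MeasurableSpace A]
    [MeasurableSpace B] {P : Measure A} {Q : Measure B} [IsProbabilityMeasure P]
    [IsProbabilityMeasure Q] {G : A × B → ℝ} {c : ℝ≥0} (hG : Measurable G)
    (h : ∀ᵐ x ∂P, HasSubgaussianMGF (fun y => G (x, y)) c Q) :
    HasSubgaussianMGF G c (P.prod Q) := by
  have hmgf (t : ℝ) : ∀ᵐ x ∂P, ∫ y, exp (t * G (x, y)) ∂Q ≤ exp (c * t ^ 2 / 2) :=
    h.mono fun x hx => hx.mgf_le t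
  have hint (t : ℝ) : Integrable (fun p => exp (t * G p)) (P.prod Q) := by
    have hm := (hG.const_mul t).exp.aestronglyMeasurable (μ := P.prod Q)
    refine (integrable_prod_iff hm).2 ⟨h.mono fun x hx => hx.integrable_exp_mul t, ?_⟩
    refine (integrable_const (exp (c * t ^ 2 / 2))).mono' hm.norm.integral_prod_right' ?_
    filter_upwards [hmgf t] with x hx
    have hpos : 0 ≤ ∫ y, exp (t * G (x, y)) ∂Q := integral_nonneg fun _ => (exp_pos _).le
    simpa [abs_of_nonneg hpos] using hx
  refine ⟨hint, fun t => ?_⟩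
  calc mgf G (P.prod Q) t = ∫ x, ∫ y, exp (t * G (x, y)) ∂Q ∂P := integral_prod _ (hint t)
    _ ≤ ∫ _, exp (c * t ^ 2 / 2) ∂P :=
        integral_mono_ae (hint t).integral_prod_left (integrable_const _) (hmgf t)
    _ = exp (c * t ^ 2 / 2) := by simp

lemma IndepFun.hasSubgaussianMGF_of_ae_hasSubgaussianMGF {Ω A B : Type*} [MeasurableSpace Ω]
    [MeasurableSpace A] [MeasurableSpace B] {μ : Measure Ω} [IsProbabilityMeasure μ]
    {Y : Ω → A} {Z : Ω → B} {G : A × B → ℝ} {c : ℝ≥0}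
    (hYZ : IndepFun Y Z μ) (hY : Measurable Y) (hZ : Measurable Z) (hG : Measurable G)
    (h : ∀ᵐ x ∂(μ.map Y), HasSubgaussianMGF (fun ω => G (x, Z ω)) c μ) :
    HasSubgaussianMGF (fun ω => G (Y ω, Z ω)) c μ := by
  have := Measure.isProbabilityMeasure_map (μ := μ) hY.aemeasurable
  have := Measure.isProbabilityMeasure_map (μ := μ) hZ.aemeasurable
  refine HasSubgaussianMGF.of_map (X := G) (hY.prodMk hZ).aemeasurable ?_
  rw [(indepFun_iff_map_prod_eq_prod_map_map hY.aemeasurable hZ.aemeasurable).1 hYZ]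
  refine hasSubgaussianMGF_prod_of_ae_hasSubgaussianMGF hG ?_
  filter_upwards [h] with x hx
  have hGx : Measurable fun y => G (x, y) := hG.comp measurable_prodMk_left
  rwa [← HasSubgaussianMGF.id_map_iff hGx.aemeasurable, Measure.map_map hGx hZ,
    HasSubgaussianMGF.id_map_iff (hGx.comp hZ).aemeasurable]

lemma iIndepFun.indepFun_inl_inr {Ω ι κ β : Type*} [MeasurableSpace Ω] {μ : Measure Ω}
    [Fintype ι] [Fintype κ] [MeasurableSpace β] {f : ι ⊕ κ → Ω → β}
    (hf : iIndepFun f μ) (hmeas : ∀ a, Measurable (f a)) :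
    IndepFun (fun ω i => f (Sum.inl i) ω) (fun ω k => f (Sum.inr k) ω) μ :=
  (hf.indepFun_finset _ _ (Finset.disjoint_map_inl_map_inr Finset.univ Finset.univ) hmeas).comp
    (φ := fun p i => p ⟨Sum.inl i, by simp⟩) (ψ := fun p k => p ⟨Sum.inr k, by simp⟩)
    (measurable_pi_lambda _ fun _ => measurable_pi_apply _)
    (measurable_pi_lambda _ fun _ => measurable_pi_apply _)

lemma hasSubgaussianMGF_sum_mul_of_indepFun {Ω ι A : Type*} [MeasurableSpace Ω]
    [MeasurableSpace A] {μ : Measure Ω} [IsProbabilityMeasure μ] [Fintype ι]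
    {Y : Ω → A} {ε : ι → Ω → ℝ} {f : ι → A → ℝ} {b : ι → ℝ≥0}
    (hY : Measurable Y) (hε : ∀ j, Measurable (ε j)) (hf : ∀ j, Measurable (f j))
    (hindep : iIndepFun ε μ) (hYε : IndepFun Y (fun ω j => ε j ω) μ)
    (hrad : ∀ j, IsRademacher (ε j) μ) (hb : ∀ᵐ ω ∂μ, ∀ j, |f j (Y ω)| ≤ b j) :
    HasSubgaussianMGF (fun ω => ∑ j, f j (Y ω) * ε j ω) (∑ j, b j ^ 2) μ := by
  have hset : MeasurableSet {x | ∀ j, |f j x| ≤ b j} := by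
    simp only [Set.ofPred_forall]
    exact MeasurableSet.iInter fun j => measurableSet_le (hf j).abs measurable_const
  refine hYε.hasSubgaussianMGF_of_ae_hasSubgaussianMGF
    (G := fun p : A × (ι → ℝ) => ∑ j, f j p.1 * p.2 j) hY (measurable_pi_lambda _ hε)
    (by fun_prop) ?_
  filter_upwards [(ae_map_iff hY.aemeasurable hset).2 hb] with x hx
  refine (hasSubgaussianMGF_sum_mul_of_isRademacher hε hindep hrad fun j => f j x).mono
    (Finset.sum_le_sum fun j _ => pow_le_pow_left₀ zero_le ?_ 2)
  rw [← NNReal.coe_le_coe, coe_nnnorm, Real.norm_eq_abs]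
  exact hx j

theorem hasSubgaussianMGF_rademacherChaos {Ω : Type*} [MeasurableSpace Ω] {μ : Measure Ω}
    [IsProbabilityMeasure μ] {n : ℕ} {N1 N2 : Fin n → ℕ} (v : Fin n → ℝ)
    {e : ((Σ i : Fin n, Fin (N1 i)) ⊕ (Σ i : Fin n, Fin (N2 i))) → Ω → ℝ}
    (hmeas : ∀ a, Measurable (e a)) (hindep : iIndepFun e μ) (hrad : ∀ a, IsRademacher (e a) μ) :
    HasSubgaussianMGF (fun ω => ∑ i, v i * (∑ ℓ : Fin (N1 i), e (Sum.inl ⟨i, ℓ⟩) ω) *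
        (∑ m : Fin (N2 i), e (Sum.inr ⟨i, m⟩) ω))
      (∑ i, ‖v i‖₊ ^ 2 * (N1 i : ℝ≥0) ^ 2 * N2 i) μ := by
  have hsign : ∀ᵐ ω ∂μ, ∀ a, e a ω = 1 ∨ e a ω = -1 :=
    ae_all_iff.2 fun a => (hrad a).ae_eq_one_or_eq_neg_one (hmeas a)
  have hb : ∀ᵐ ω ∂μ, ∀ j : Σ i : Fin n, Fin (N2 i),
      |v j.1 * ∑ ℓ : Fin (N1 j.1), e (Sum.inl ⟨j.1, ℓ⟩) ω| ≤ ‖v j.1‖₊ * (N1 j.1 : ℝ≥0) := by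
    filter_upwards [hsign] with ω hω j
    have hsum : |∑ ℓ : Fin (N1 j.1), e (Sum.inl ⟨j.1, ℓ⟩) ω| ≤ N1 j.1 :=
      calc _ ≤ ∑ ℓ : Fin (N1 j.1), |e (Sum.inl ⟨j.1, ℓ⟩) ω| := Finset.abs_sum_le_sum_abs _ _
        _ = N1 j.1 := by
          simp [fun ℓ => show |e (Sum.inl ⟨j.1, ℓ⟩) ω| = 1 by
            rcases hω (Sum.inl ⟨j.1, ℓ⟩) with h | h <;> simp [h]]
    rw [abs_mul]
    push_cast
    exact mul_le_mul_of_nonneg_left hsum (abs_nonneg _)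
  have hX := hasSubgaussianMGF_sum_mul_of_indepFun (Y := fun ω k => e (Sum.inl k) ω)
    (f := fun j x => v j.1 * ∑ ℓ : Fin (N1 j.1), x ⟨j.1, ℓ⟩)
    (b := fun j => ‖v j.1‖₊ * (N1 j.1 : ℝ≥0)) (measurable_pi_lambda _ fun _ => hmeas _)
    (fun _ => hmeas _) (fun _ => by fun_prop) (hindep.precomp Sum.inr_injective)
    (hindep.indepFun_inl_inr hmeas) (fun _ => hrad _) hb
  convert hX using 1
  · ext ω
    simp only [Fintype.sum_sigma, Finset.mul_sum]
  · simp only [Fintype.sum_sigma, mul_pow, Finset.sum_const, Finset.card_univ, Fintype.card_fin,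
      nsmul_eq_mul, mul_comm]

end ProbabilityTheory

open MeasureTheory ProbabilityTheory

theorem rademacher_chaos_tail_bound
    {Ω : Type*} [MeasurableSpace Ω] (μ : Measure Ω) [IsProbabilityMeasure μ]
    (n : ℕ) (N1 N2 : Fin n → ℕ) (v : Fin n → ℝ)
    (e : ((Σ i : Fin n, Fin (N1 i)) ⊕ (Σ i : Fin n, Fin (N2 i))) → Ω → ℝ)
    (hmeas : ∀ a, Measurable (e a))
    (hindep : iIndepFun e μ)
    (hrad : ∀ a, μ {ω | e a ω = 1} = 1 / 2 ∧ μ {ω | e a ω = -1} = 1 / 2) :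
    ∀ τ : ℝ, 0 < τ →
      μ {ω |
          τ * Real.sqrt (min (∑ i, (v i) ^ 2 * (N1 i : ℝ) ^ 2 * (N2 i : ℝ))
              (∑ i, (v i) ^ 2 * (N1 i : ℝ) * (N2 i : ℝ) ^ 2)) <
            |∑ i, v i * (∑ ℓ : Fin (N1 i), e (Sum.inl ⟨i, ℓ⟩) ω) *
              (∑ m : Fin (N2 i), e (Sum.inr ⟨i, m⟩) ω)|} ≤
        ENNReal.ofReal (4 * Real.exp (-τ ^ 2 / 2)) := by
  intro τ hτ
  have h₁ := hasSubgaussianMGF_rademacherChaos v hmeas hindep hrad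
  have h₂ := hasSubgaussianMGF_rademacherChaos (N1 := N2) (N2 := N1) v (e := fun a => e a.swap)
    (fun _ => hmeas _) (hindep.precomp Sum.swap_leftInverse.injective) (fun _ => hrad _)
  simp only [Sum.swap_inl, Sum.swap_inr, mul_right_comm _ (∑ m : Fin (N2 _), _)] at h₂
  have htail :=
    (min_rec' (fun c => HasSubgaussianMGF _ c μ) h₁ h₂).measure_mul_sqrt_lt_abs_le hτ.le
  have hW : ∑ i, v i ^ 2 * (N2 i : ℝ) ^ 2 * N1 i = ∑ i, v i ^ 2 * N1 i * (N2 i : ℝ) ^ 2 :=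
    Finset.sum_congr rfl fun i _ => by ring
  push_cast [Real.norm_eq_abs, sq_abs] at htail
  rw [hW] at htail
  exact htail.trans (ENNReal.ofReal_le_ofReal (by linarith [Real.exp_pos (-τ ^ 2 / 2)]))
end

section
/- Let Z ≥ 0 be a random variable satisfying P(Z > η σ) ≤ (1 + 4√(2π) η) exp(−η²/2) for all η > 0 and some σ > 0. Then for any λ > 0, E[exp(λ Z)] ≤ 1 + 64√(2π) λσ + 16√(2π) λσ (1 + 32√(2π) λσ) exp(32 λ² σ²). -/
/-!
By the layer-cake formula, `E[exp (l Z)] ≤ 1 + ∫_1^∞ P(exp (l Z) > t) dt`. Substituting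
`t = exp (a η)` with `a = l σ` turns the tail hypothesis into a bound on the integrand, and
completing the square, `-η²/2 ≤ b²/2 - b η` with `b = a + 1`, together with `η ≤ 2 exp (η/2)`,
dominates it by `exp ((a+1)²/2) (t^(-(1 + 1/a)) + 8 √(2π) t^(-(1 + 1/(2a))))`. The integral of
this majorant over `(1, ∞)` is `exp ((a+1)²/2) (a + 16 √(2π) a)`, and the stated bound is a crude
numerical upper bound for it.
-/

open MeasureTheory Set Real

section LayerCake

variable {Ω : Type*} [MeasurableSpace Ω] (μ : Measure Ω)

theorem lintegral_ofReal_le_lintegral_meas_lt (F : Ω → ℝ) :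
    ∫⁻ ω, ENNReal.ofReal (F ω) ∂μ ≤ ∫⁻ t in Ioi 0, μ {ω | t < F ω} := by
  obtain ⟨g, hg, hgF, hFg⟩ := exists_measurable_le_lintegral_eq μ fun ω ↦ ENNReal.ofReal (F ω)
  have hg_ne_top (ω : Ω) : g ω ≠ ⊤ := ne_top_of_le_ne_top ENNReal.ofReal_ne_top (hgF ω)
  rw [hFg, lintegral_congr fun ω ↦ (ENNReal.ofReal_toReal (hg_ne_top ω)).symm,
    lintegral_eq_lintegral_meas_lt μ (ae_of_all _ fun _ ↦ ENNReal.toReal_nonneg)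
      hg.ennreal_toReal.aemeasurable]
  refine setLIntegral_mono' measurableSet_Ioi fun t ht ↦ measure_mono fun ω hω ↦ ?_
  have hg_le : (g ω).toReal ≤ max (F ω) 0 := ENNReal.toReal_mono ENNReal.ofReal_ne_top (hgF ω)
  exact (lt_max_iff.mp (lt_of_lt_of_le hω hg_le)).resolve_right (not_lt.mpr (le_of_lt ht))

theorem lintegral_ofReal_le_measure_univ_add (F : Ω → ℝ) :
    ∫⁻ ω, ENNReal.ofReal (F ω) ∂μ ≤ μ univ + ∫⁻ t in Ioi 1, μ {ω | t < F ω} := by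
  calc ∫⁻ ω, ENNReal.ofReal (F ω) ∂μ
      ≤ ∫⁻ t in Ioc 0 1 ∪ Ioi 1, μ {ω | t < F ω} :=
        (lintegral_ofReal_le_lintegral_meas_lt μ F).trans
          (lintegral_mono_set Ioi_subset_Ioc_union_Ioi)
    _ ≤ (∫⁻ t in Ioc 0 1, μ {ω | t < F ω}) + ∫⁻ t in Ioi 1, μ {ω | t < F ω} :=
        lintegral_union_le _ _ _
    _ ≤ (∫⁻ _ in Ioc (0 : ℝ) 1, μ univ) + ∫⁻ t in Ioi 1, μ {ω | t < F ω} := by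
        gcongr
        exact subset_univ _
    _ = μ univ + ∫⁻ t in Ioi 1, μ {ω | t < F ω} := by simp

end LayerCake

theorem integral_Ioi_one_rpow_neg {p : ℝ} (hp : 1 < p) : ∫ t in Ioi 1, t ^ (-p) = (p - 1)⁻¹ := by
  rw [integral_Ioi_rpow_of_lt (by linarith) one_pos, one_rpow, neg_div, ← div_neg, neg_add',
    neg_neg, one_div]

theorem lintegral_Ioi_one_ofReal_mul_rpow_neg_add {E C p q : ℝ} (hE : 0 ≤ E) (hC : 0 ≤ C)
    (hp : 1 < p) (hq : 1 < q) :
    ∫⁻ t in Ioi 1, ENNReal.ofReal (E * (t ^ (-p) + C * t ^ (-q))) =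
      ENNReal.ofReal (E * ((p - 1)⁻¹ + C * (q - 1)⁻¹)) := by
  have hint (r : ℝ) (hr : 1 < r) : IntegrableOn (fun t : ℝ ↦ t ^ (-r)) (Ioi 1) :=
    integrableOn_Ioi_rpow_of_lt (by linarith) one_pos
  have hsum : IntegrableOn (fun t : ℝ ↦ t ^ (-p) + C * t ^ (-q)) (Ioi 1) :=
    (hint p hp).add ((hint q hq).const_mul C)
  have hnonneg : 0 ≤ᵐ[volume.restrict (Ioi 1)] fun t : ℝ ↦ E * (t ^ (-p) + C * t ^ (-q)) := by
    filter_upwards [ae_restrict_mem measurableSet_Ioi] with t ht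
    have ht0 : 0 ≤ t := zero_le_one.trans (le_of_lt ht)
    positivity
  rw [← ofReal_integral_eq_lintegral_ofReal (hsum.const_mul E) hnonneg, integral_const_mul,
    integral_add (hint p hp) ((hint q hq).const_mul C), integral_const_mul,
    integral_Ioi_one_rpow_neg hp, integral_Ioi_one_rpow_neg hq]

theorem exp_neg_sq_half_le (b η : ℝ) : exp (-η ^ 2 / 2) ≤ exp (b ^ 2 / 2) * exp (-(b * η)) := by
  rw [← exp_add]
  gcongr
  nlinarith [sq_nonneg (η - b)]

theorem one_add_mul_mul_exp_neg_sq_half_le {c : ℝ} (hc : 0 ≤ c) (b η : ℝ) :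
    (1 + 4 * c * η) * exp (-η ^ 2 / 2) ≤
      exp (b ^ 2 / 2) * (exp (-(b * η)) + 8 * c * exp (-((b - 1 / 2) * η))) := by
  have hlin : η * exp (-η ^ 2 / 2) ≤ 2 * (exp (b ^ 2 / 2) * exp (-((b - 1 / 2) * η))) :=
    calc η * exp (-η ^ 2 / 2) ≤ 2 * exp (η / 2) * exp (-η ^ 2 / 2) := by
          gcongr
          linarith [add_one_le_exp (η / 2), exp_pos (η / 2)]
      _ ≤ 2 * exp (η / 2) * (exp (b ^ 2 / 2) * exp (-(b * η))) := by
          gcongr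
          exact exp_neg_sq_half_le b η
      _ = 2 * (exp (b ^ 2 / 2) * exp (-((b - 1 / 2) * η))) := by
          simp only [mul_assoc, ← exp_add]
          ring_nf
  nlinarith [exp_neg_sq_half_le b η, mul_le_mul_of_nonneg_left hlin (by positivity : 0 ≤ 4 * c)]

theorem one_add_mul_mul_exp_neg_sq_half_log_div_le {a c t : ℝ} (ha : 0 < a) (hc : 0 ≤ c)
    (ht : 0 < t) :
    (1 + 4 * c * (log t / a)) * exp (-(log t / a) ^ 2 / 2) ≤
      exp ((a + 1) ^ 2 / 2) * (t ^ (-(1 + a⁻¹)) + 8 * c * t ^ (-(1 + (2 * a)⁻¹))) := by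
  have hrpow (b b' : ℝ) (hb : b / a = b') : t ^ (-b') = exp (-(b * (log t / a))) := by
    rw [rpow_def_of_pos ht, ← hb]
    ring_nf
  rw [hrpow (a + 1) _ (by field_simp), hrpow (a + 1 - 1 / 2) _ (by field_simp; ring)]
  exact one_add_mul_mul_exp_neg_sq_half_le hc (a + 1) (log t / a)

theorem setOf_lt_exp_mul_eq {Ω : Type*} (Z : Ω → ℝ) {l σ t : ℝ} (hl : 0 < l) (hσ : 0 < σ)
    (ht : 0 < t) : {ω | t < exp (l * Z ω)} = {ω | log t / (l * σ) * σ < Z ω} := by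
  ext ω
  rw [mem_ofPred_eq, mem_ofPred_eq, ← log_lt_iff_lt_exp ht, div_mul_eq_mul_div,
    mul_div_mul_right _ _ hσ.ne', div_lt_iff₀' hl]

theorem exp_add_one_sq_half_mul_le {a c : ℝ} (ha : 0 < a) (hc : 2 ≤ c) :
    exp ((a + 1) ^ 2 / 2) * (a + 16 * c * a) ≤
      64 * c * a + 16 * c * a * (1 + 32 * c * a) * exp (32 * a ^ 2) := by
  set E := exp (32 * a ^ 2)
  have hE : 1 ≤ E := one_le_exp (by positivity)
  have hca : 0 < c * a := by positivity
  have hlead : exp ((a + 1) ^ 2 / 2) ≤ 3 * E :=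
    calc exp ((a + 1) ^ 2 / 2) ≤ exp (1 + 32 * a ^ 2) := by
          gcongr
          nlinarith [sq_nonneg (63 * a - 1)]
      _ = exp 1 * E := exp_add _ _
      _ ≤ 3 * E := by
          gcongr
          linarith [exp_one_lt_d9]
  have hlhs : exp ((a + 1) ^ 2 / 2) * (a + 16 * c * a) ≤ 51 * (c * a) * E :=
    calc exp ((a + 1) ^ 2 / 2) * (a + 16 * c * a) ≤ 3 * E * (17 * (c * a)) := by
          gcongr
          nlinarith
      _ = 51 * (c * a) * E := by ring
  suffices 35 * E ≤ 64 + 512 * (c * a) * E by nlinarith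
  rcases le_or_gt (35 / 512) (c * a) with hlarge | hsmall
  · nlinarith
  · have hsq : 32 * a ^ 2 ≤ 1 / 10 := by nlinarith
    have hE_le : E ≤ 10 / 9 :=
      calc E ≤ 1 / (1 - 32 * a ^ 2) :=
            exp_bound_div_one_sub_of_interval (by positivity) (by linarith)
        _ ≤ 10 / 9 := by
            rw [div_le_div_iff₀ (by linarith) (by norm_num)]
            linarith
    nlinarith

theorem tail_to_mgf_conversion_general
    {Ω : Type*} [MeasurableSpace Ω] (μ : Measure Ω) [IsProbabilityMeasure μ]
    (Z : Ω → ℝ) (σ : ℝ) (hσ : 0 < σ)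
    (htail : ∀ η : ℝ, 0 < η →
      μ {ω | η * σ < Z ω} ≤
        ENNReal.ofReal ((1 + 4 * Real.sqrt (2 * Real.pi) * η) * Real.exp (-η ^ 2 / 2))) :
    ∀ l : ℝ, 0 < l →
      ∫⁻ ω, ENNReal.ofReal (Real.exp (l * Z ω)) ∂μ ≤
        ENNReal.ofReal
          (1 + 64 * Real.sqrt (2 * Real.pi) * l * σ +
            16 * Real.sqrt (2 * Real.pi) * l * σ *
              (1 + 32 * Real.sqrt (2 * Real.pi) * l * σ) * Real.exp (32 * l ^ 2 * σ ^ 2)) := by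
  intro l hl
  set c := √(2 * π)
  have hc : 2 ≤ c := (le_sqrt' two_pos).mpr (by linarith [pi_gt_three])
  set a := l * σ
  have ha : 0 < a := mul_pos hl hσ
  have hpoint (t : ℝ) (ht : t ∈ Ioi 1) : μ {ω | t < exp (l * Z ω)} ≤ ENNReal.ofReal
      (exp ((a + 1) ^ 2 / 2) * (t ^ (-(1 + a⁻¹)) + 8 * c * t ^ (-(1 + (2 * a)⁻¹)))) := by
    rw [setOf_lt_exp_mul_eq Z hl hσ (one_pos.trans ht)]
    exact (htail _ (div_pos (log_pos ht) ha)).trans <| ENNReal.ofReal_le_ofReal <|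
      one_add_mul_mul_exp_neg_sq_half_log_div_le ha (sqrt_nonneg _) (one_pos.trans ht)
  calc ∫⁻ ω, ENNReal.ofReal (exp (l * Z ω)) ∂μ
      ≤ μ univ + ∫⁻ t in Ioi 1, μ {ω | t < exp (l * Z ω)} :=
        lintegral_ofReal_le_measure_univ_add μ _
    _ ≤ 1 + ∫⁻ t in Ioi 1, ENNReal.ofReal
          (exp ((a + 1) ^ 2 / 2) * (t ^ (-(1 + a⁻¹)) + 8 * c * t ^ (-(1 + (2 * a)⁻¹)))) := by
        rw [measure_univ]
        gcongr 1 + ?_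
        exact setLIntegral_mono' measurableSet_Ioi hpoint
    _ = ENNReal.ofReal (1 + exp ((a + 1) ^ 2 / 2) * (a + 16 * c * a)) := by
        rw [lintegral_Ioi_one_ofReal_mul_rpow_neg_add (by positivity) (by positivity)
          (by simpa using ha) (by simpa using ha), add_sub_cancel_left, add_sub_cancel_left,
          inv_inv, inv_inv, ENNReal.ofReal_add zero_le_one (by positivity), ENNReal.ofReal_one]
        ring_nf
    _ ≤ _ := by
        refine ENNReal.ofReal_le_ofReal ?_
        rw [show 32 * l ^ 2 * σ ^ 2 = 32 * a ^ 2 by rw [mul_assoc, ← mul_pow]]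
        linear_combination exp_add_one_sq_half_mul_le ha hc

theorem tail_to_mgf_conversion
    {Ω : Type*} [MeasurableSpace Ω] (μ : Measure Ω) [IsProbabilityMeasure μ]
    (Z : Ω → ℝ) (hZnn : ∀ ω, 0 ≤ Z ω) (σ : ℝ) (hσ : 0 < σ)
    (htail : ∀ η : ℝ, 0 < η →
      μ {ω | η * σ < Z ω} ≤
        ENNReal.ofReal ((1 + 4 * Real.sqrt (2 * Real.pi) * η) * Real.exp (-η ^ 2 / 2))) :
    ∀ l : ℝ, 0 < l →
      ∫⁻ ω, ENNReal.ofReal (Real.exp (l * Z ω)) ∂μ ≤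
        ENNReal.ofReal
          (1 + 64 * Real.sqrt (2 * Real.pi) * l * σ +
            16 * Real.sqrt (2 * Real.pi) * l * σ *
              (1 + 32 * Real.sqrt (2 * Real.pi) * l * σ) * Real.exp (32 * l ^ 2 * σ ^ 2)) :=
  tail_to_mgf_conversion_general μ Z σ hσ htail
end
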